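/- arXiv:1310.0299 — 5 statements merged into one kernel-verified Lean document; each statement's English description precedes it below -/
import Mathlib

section
/- Let m₁, …, m_n be integers and let s_k, t_k be defined by the recursions s₀ = 1, s₁ = m₁, s_k = m_k s_{k−1} + s_{k−2}, t₀ = 0, t₁ = 1, t_k = m_k t_{k−1} + t_{k−2}. In SL(2,ℤ) set A = [[0,−1],[1,0]] and B_c = [[1,0],[−c,1]] for an integer c, and define matrices M_j recursively by M₀ = A and M_j = A · B_{(−1)^{j+1} m_j} · M_{j−1} for 1 ≤ j ≤ n (so M_n is the matrix associated to the composite transform Φ ∘ L^{(−1)^{n+1}m_n} ∘ Φ ∘ ⋯ ∘ L^{−m₂} ∘ Φ ∘ L^{m₁} ∘ Φ). Then M_n = (−1)^{n(n+1)/2} · [[(−1)^{n+1} t_n, (−1)^{n+1} s_n], [t_{n−1}, s_{n−1}]]. -/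
/-- The numerator sequence: `s₀ = 1`, `s₁ = m₁`, `s_k = m_k s_{k-1} + s_{k-2}`. -/
def sSeq (m : ℕ → ℤ) : ℕ → ℤ
  | 0 => 1
  | 1 => m 1
  | (k + 2) => m (k + 2) * sSeq m (k + 1) + sSeq m k

/-- The denominator sequence: `t₀ = 0`, `t₁ = 1`, `t_k = m_k t_{k-1} + t_{k-2}`. -/
def tSeq (m : ℕ → ℤ) : ℕ → ℤ
  | 0 => 0
  | 1 => 1
  | (k + 2) => m (k + 2) * tSeq m (k + 1) + tSeq m k

/-- The matrix `A = [[0,-1],[1,0]]` corresponding to the Poincaré Fourier-Mukai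
transform `Φ`. -/
def Pmat : Matrix (Fin 2) (Fin 2) ℤ := !![0, -1; 1, 0]

/-- The matrix `B_c = [[1,0],[-c,1]]` corresponding to tensoring by `L^c`. -/
def Bmat (c : ℤ) : Matrix (Fin 2) (Fin 2) ℤ := !![1, 0; -c, 1]

/-- The matrix of the composite transform
`Φ ∘ L^{(-1)^{n+1} m_n} ∘ Φ ∘ ⋯ ∘ L^{-m₂} ∘ Φ ∘ L^{m₁} ∘ Φ`:
`M₀ = A` and `M_j = A · B_{(-1)^{j+1} m_j} · M_{j-1}`. -/
def Mmat (m : ℕ → ℤ) : ℕ → Matrix (Fin 2) (Fin 2) ℤ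
  | 0 => Pmat
  | (j + 1) => Pmat * Bmat ((-1) ^ (j + 2) * m (j + 1)) * Mmat m j

/-!
Since `A · B_c = [[c, -1], [1, 0]]`, each step multiplies `M_{j-1}` on the left by a
continuant-type matrix. The sign `(-1)^{j+1}` attached to `m_j` cancels against the sign
`(-1)^j` carried by the first row of `M_{j-1}`, so the first row of `M_j` is `-(m_j t_{j-1} +
t_{j-2}, m_j s_{j-1} + s_{j-2})`, while the first row of `M_{j-1}` moves down to the second.
The overall sign grows by `(-1)^j`, whence the exponent `n(n+1)/2 = 1 + 2 + ⋯ + n`.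
-/

lemma Pmat_mul_Bmat (c : ℤ) : Pmat * Bmat c = !![c, -1; 1, 0] := by
  ext i j
  fin_cases i <;> fin_cases j <;> simp [Pmat, Bmat]

lemma Mmat_succ (m : ℕ → ℤ) (j : ℕ) :
    Mmat m (j + 1) = !![(-1) ^ (j + 2) * m (j + 1), -1; 1, 0] * Mmat m j := by
  rw [Mmat, Pmat_mul_Bmat]

lemma neg_one_pow_succ_mul_succ_div_two (n : ℕ) :
    (-1 : ℤ) ^ ((n + 1) * (n + 1 + 1) / 2) = (-1) ^ (n + 1) * (-1) ^ (n * (n + 1) / 2) := by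
  rw [show (n + 1) * (n + 1 + 1) = n * (n + 1) + (n + 1) * 2 by ring,
    Nat.add_mul_div_right _ _ two_pos, pow_add, mul_comm]

/-- At `n = 0` the truncated subtraction `n - 1 = 0` makes the second row `(t₀, s₀)`, so this
is the intended matrix only for `n ≥ 1`. -/
def signedContinuantMatrix (m : ℕ → ℤ) (n : ℕ) : Matrix (Fin 2) (Fin 2) ℤ :=
  !![(-1 : ℤ) ^ (n + 1) * tSeq m n, (-1 : ℤ) ^ (n + 1) * sSeq m n;
     tSeq m (n - 1), sSeq m (n - 1)]

lemma mul_signedContinuantMatrix (m : ℕ → ℤ) {n : ℕ} (hn : 1 ≤ n) :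
    !![(-1) ^ (n + 2) * m (n + 1), -1; 1, 0] * signedContinuantMatrix m n =
      (-1) ^ (n + 1) • signedContinuantMatrix m (n + 1) := by
  obtain ⟨k, rfl⟩ := Nat.exists_eq_add_of_le' hn
  ext i j
  -- after normalisation the two signs meet as `(-1) ^ (k * 2) = 1`
  fin_cases i <;> fin_cases j <;>
    simp [signedContinuantMatrix, sSeq, tSeq, pow_succ] <;> ring_nf <;> simp [pow_mul']

lemma Mmat_eq_signedContinuantMatrix (m : ℕ → ℤ) {n : ℕ} (hn : 1 ≤ n) :
    Mmat m n = (-1 : ℤ) ^ (n * (n + 1) / 2) • signedContinuantMatrix m n := by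
  induction n, hn using Nat.le_induction with
  | base =>
    rw [Mmat_succ]
    ext i j
    fin_cases i <;> fin_cases j <;> simp [Mmat, Pmat, signedContinuantMatrix, sSeq, tSeq]
  | succ n hn ih =>
    rw [Mmat_succ, ih, Matrix.mul_smul, mul_signedContinuantMatrix m hn, smul_smul,
      neg_one_pow_succ_mul_succ_div_two, mul_comm]

/-- For every `n ≥ 1`,
`M_n = (-1)^{n(n+1)/2} [[(-1)^{n+1} t_n, (-1)^{n+1} s_n], [t_{n-1}, s_{n-1}]]`. -/
theorem isometric_automorphism_of_composite (m : ℕ → ℤ) (n : ℕ) (hn : 1 ≤ n) :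
    Mmat m n = ((-1 : ℤ) ^ (n * (n + 1) / 2)) •
      !![(-1 : ℤ) ^ (n + 1) * tSeq m n, (-1 : ℤ) ^ (n + 1) * sSeq m n;
         tSeq m (n - 1), sSeq m (n - 1)] := by
  exact Mmat_eq_signedContinuantMatrix m hn
end

section
/- Let g ≥ 2 be an integer, let x, y, z, w be real numbers with xw − yz = 1, and let u be a complex number with x − yu ≠ 0. Set v = (−z + wu)/(x − yu). Then for every 1 ≤ m ≤ g+1, Σ_{n=1}^{g+1} a^{(g)}_{m,n}(x,y,z,w) · u^{n−1} = (x − yu)^g · v^{m−1}. In vector form: the complexified matrix (a^{(g)}_{m,n}) applied to the column vector (1, u, u², …, u^g) equals (x − yu)^g times the column vector (1, v, v², …, v^g). (This is the identity Φ_E^H(e^{uℓ}) = (x − yu)^g e^{(−z+wu)ℓ/(x−yu)} for the induced cohomological Fourier–Mukai transform.) -/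
/-- The entry `a^{(g)}_{m,n}(x,y,z,w)` of the matrix of `ρ^(g)` with respect to the
basis `Ω = {(-1)^r (g choose r) u₁^{g-r} u₂^r}`, written with zero-based indices
`i = m - 1`, `j = n - 1` and summation variable `l = λ - 1`. -/
def aEnt (R : Type*) [CommRing R] (k : ℕ) (x y z w : R) (i j : ℕ) : R :=
  (-1 : R) ^ (i + j) * ∑ l ∈ Finset.range (k + 1),
    if l ≤ j then
      ((k - i).choose l : R) * (i.choose (j - l) : R) *
        x ^ (k - i - l) * y ^ l * z ^ (i + l - j) * w ^ (j - l)
    else 0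

/-! The row sums are a Cauchy product: the `l`-sum in `aEnt` is the coefficient of `u ^ j` in
`(x - y u) ^ (k - i) * (-z + w u) ^ i`, once both factors are expanded by the binomial theorem. -/

open Finset

theorem Finset.sum_range_cauchy_product {R : Type*} [CommSemiring R] {f g : ℕ → R} {a b n : ℕ}
    (hf : ∀ l, a < l → f l = 0) (hg : ∀ t, b < t → g t = 0) (hn : a + b < n) :
    ∑ j ∈ range n, ∑ l ∈ range (j + 1), f l * g (j - l) =
      (∑ l ∈ range (a + 1), f l) * ∑ t ∈ range (b + 1), g t := by
  have hg_sum : ∀ l ≤ a, ∑ t ∈ range (n - l), g t = ∑ t ∈ range (b + 1), g t := fun l hl =>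
    eventually_constant_sum (fun t ht => hg t ht) (by omega)
  calc ∑ j ∈ range n, ∑ l ∈ range (j + 1), f l * g (j - l)
      = ∑ l ∈ range n, f l * ∑ t ∈ range (b + 1), g t := by
        refine (sum_range_diag_flip n fun l t => f l * g t).trans ?_
        refine sum_congr rfl fun l _ => ?_
        rw [← mul_sum]
        rcases le_or_gt l a with hl | hl
        · rw [hg_sum l hl]
        · simp [hf l hl]
    _ = (∑ l ∈ range (a + 1), f l) * ∑ t ∈ range (b + 1), g t := by
        rw [← sum_mul, eventually_constant_sum (fun l hl => hf l hl) (by omega)]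

section

variable {R : Type*} [CommRing R] (k : ℕ) (x y z w u : R) {i : ℕ}

theorem aEnt_mul_pow_eq_sum {j : ℕ} (hj : j ≤ k) :
    aEnt R k x y z w i j * u ^ j =
      ∑ l ∈ range (j + 1), (-(y * u)) ^ l * x ^ (k - i - l) * ((k - i).choose l : R) *
        ((w * u) ^ (j - l) * (-z) ^ (i - (j - l)) * (i.choose (j - l) : R)) := by
  have hrange : (range (k + 1)).filter (· ≤ j) = range (j + 1) := by
    ext l; simp only [mem_filter, mem_range]; omega
  rw [aEnt, ← sum_filter, hrange, mul_sum, sum_mul]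
  refine sum_congr rfl fun l hl => ?_
  obtain ⟨t, rfl⟩ := Nat.exists_eq_add_of_le (Nat.lt_succ_iff.mp (mem_range.mp hl))
  rw [Nat.add_sub_cancel_left]
  rcases le_or_gt t i with ht | ht
  · obtain ⟨s, rfl⟩ := Nat.exists_eq_add_of_le' ht
    rw [show s + t + l - (l + t) = s by omega, Nat.add_sub_cancel]
    have hsign : (-1 : R) ^ (s + t + (l + t)) = (-1) ^ l * (-1) ^ s := by
      rw [show s + t + (l + t) = l + s + (t + t) by omega, pow_add, Even.neg_one_pow ⟨t, rfl⟩,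
        mul_one, pow_add]
    rw [hsign, neg_pow (y * u), neg_pow z, mul_pow, mul_pow, pow_add]
    ring
  · simp [Nat.choose_eq_zero_of_lt ht]

theorem sum_range_aEnt_mul_pow (hi : i ≤ k) :
    ∑ j ∈ range (k + 1), aEnt R k x y z w i j * u ^ j =
      (x - y * u) ^ (k - i) * (-z + w * u) ^ i := by
  calc ∑ j ∈ range (k + 1), aEnt R k x y z w i j * u ^ j
      = (-(y * u) + x) ^ (k - i) * (w * u + -z) ^ i := by
        rw [sum_congr rfl fun j hj => aEnt_mul_pow_eq_sum k x y z w u (mem_range_succ_iff.mp hj),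
          add_pow, add_pow]
        refine sum_range_cauchy_product
          (f := fun l => (-(y * u)) ^ l * x ^ (k - i - l) * ((k - i).choose l : R))
          (g := fun t => (w * u) ^ t * (-z) ^ (i - t) * (i.choose t : R)) ?_ ?_ (by omega)
        · intro l hl; simp [Nat.choose_eq_zero_of_lt hl]
        · intro t ht; simp [Nat.choose_eq_zero_of_lt ht]
    _ = (x - y * u) ^ (k - i) * (-z + w * u) ^ i := by ring

end

theorem cohomological_FMT_on_exponentials_general (g : ℕ)
    (x y z w : ℝ) (u : ℂ)
    (hu : (x : ℂ) - (y : ℂ) * u ≠ 0) :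
    ∀ i : Fin (g + 1),
      ∑ j ∈ Finset.range (g + 1),
          aEnt ℂ g (x : ℂ) (y : ℂ) (z : ℂ) (w : ℂ) (i : ℕ) j * u ^ j
        = ((x : ℂ) - (y : ℂ) * u) ^ g *
            ((-(z : ℂ) + (w : ℂ) * u) / ((x : ℂ) - (y : ℂ) * u)) ^ (i : ℕ) := by
  intro i
  have hi : (i : ℕ) ≤ g := Nat.lt_succ_iff.mp i.isLt
  rw [sum_range_aEnt_mul_pow _ _ _ _ _ _ hi, pow_sub₀ _ hu hi, div_pow]
  ring

/-- For `g ≥ 2`, real `x, y, z, w` with `xw - yz = 1` and `u ∈ ℂ` with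
`x - yu ≠ 0`, setting `v = (-z + wu)/(x - yu)`, for every row `m = i + 1`:
`Σ_{n=1}^{g+1} a^{(g)}_{m,n}(x,y,z,w) u^{n-1} = (x - yu)^g v^{m-1}`;
i.e. `Φ_E^H (e^{uℓ}) = (x - yu)^g e^{(-z+wu)ℓ/(x-yu)}`. -/
theorem cohomological_FMT_on_exponentials (g : ℕ) (hg : 2 ≤ g)
    (x y z w : ℝ) (hdet : x * w - y * z = 1) (u : ℂ)
    (hu : (x : ℂ) - (y : ℂ) * u ≠ 0) :
    ∀ i : Fin (g + 1),
      ∑ j ∈ Finset.range (g + 1),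
          aEnt ℂ g (x : ℂ) (y : ℂ) (z : ℂ) (w : ℂ) (i : ℕ) j * u ^ j
        = ((x : ℂ) - (y : ℂ) * u) ^ g *
            ((-(z : ℂ) + (w : ℂ) * u) / ((x : ℂ) - (y : ℂ) * u)) ^ (i : ℕ) :=
  cohomological_FMT_on_exponentials_general g x y z w u hu
end

section
/- Let g ≥ 2 be an integer and let x, y, z, w be real numbers with xw − yz = 1. Define the bilinear pairing on ℝ^{g+1} (coordinates indexed 0,…,g) by ⟨v, w⟩ = Σ_{i=0}^{g} (−1)^i (g choose i) v_i w_{g−i}. Then the matrix A = (a^{(g)}_{m,n}(x,y,z,w)) is an isometry for this pairing: ⟨A v, A w⟩ = ⟨v, w⟩ for all v, w ∈ ℝ^{g+1}. (This is the statement that the induced cohomological Fourier–Mukai transform preserves the Mukai pairing, in rank-one coordinates.) -/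
/-- The `(g+1) × (g+1)` real matrix `A(x,y,z,w) = (a^{(g)}_{m,n}(x,y,z,w))`. -/
def Amat (g : ℕ) (x y z w : ℝ) : Matrix (Fin (g + 1)) (Fin (g + 1)) ℝ :=
  Matrix.of fun m n => aEnt ℝ g x y z w (m : ℕ) (n : ℕ)

/-- The Mukai pairing in rank-one coordinates (indexed `0, …, g`):
`⟨v, w⟩ = Σ_{i=0}^{g} (-1)^i (g choose i) v_i w_{g-i}`. -/
def mukaiPair (g : ℕ) (v w : Fin (g + 1) → ℝ) : ℝ :=
  ∑ i : Fin (g + 1), (-1 : ℝ) ^ (i : ℕ) * (g.choose (i : ℕ) : ℝ) * v i * w i.rev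

open MvPolynomial Finset
open scoped Nat

namespace MvPolynomial

variable {σ R : Type*} [CommSemiring R]

theorem pderiv_pderiv_comm (i j : σ) (p : MvPolynomial σ R) :
    pderiv i (pderiv j p) = pderiv j (pderiv i p) := by
  classical
  induction p using MvPolynomial.induction_on with
  | C a => simp
  | add p q hp hq => simp [hp, hq]
  | mul_X p k hp =>
    simp only [pderiv_mul, hp, pderiv_X, map_add, Pi.single_apply]
    split_ifs <;> simp [add_comm, add_left_comm]

theorem factorial_mul_coeff_pderiv_pow (i : σ) (n : ℕ) (m : σ →₀ ℕ) (p : MvPolynomial σ R) :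
    ((m i)! : R) * coeff m (((pderiv i).toLinearMap ^ n) p)
      = ((m i + n)! : R) * coeff (m + Finsupp.single i n) p := by
  induction n generalizing m with
  | zero => simp
  | succ n ih =>
    have key := ih (m + Finsupp.single i 1)
    simp only [Finsupp.add_apply, Finsupp.single_eq_same, add_assoc,
      ← Finsupp.single_add] at key
    rw [pow_succ', Module.End.mul_apply, Derivation.coeFn_coe, coeff_pderiv,
      ← mul_assoc, add_comm n 1, ← key, Nat.factorial_succ]
    push_cast
    ring

theorem constantCoeff_pderiv_pow_pderiv_pow {i j : σ} (hij : i ≠ j) (a b : ℕ)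
    (p : MvPolynomial σ R) :
    constantCoeff (((pderiv i).toLinearMap ^ a) (((pderiv j).toLinearMap ^ b) p))
      = (a ! * b ! : R) * coeff (Finsupp.single i a + Finsupp.single j b) p := by
  have outer := factorial_mul_coeff_pderiv_pow i a 0 (((pderiv j).toLinearMap ^ b) p)
  have inner := factorial_mul_coeff_pderiv_pow j b (Finsupp.single i a) p
  simp only [Finsupp.coe_zero, Pi.zero_apply, Nat.factorial_zero, Nat.cast_one, one_mul,
    zero_add, Finsupp.single_eq_of_ne hij.symm] at outer inner
  rw [constantCoeff_eq, outer, inner, mul_assoc]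

end MvPolynomial

theorem Nat.choose_mul_choose_mul_choose_mul_factorials (a b c d : ℕ) :
    (a + b + c + d).choose (a + b) * (c + d).choose c * (a + b).choose a
      * (a ! * b ! * c ! * d !) = (a + b + c + d)! := by
  have hn := Nat.add_choose_mul_factorial_mul_factorial (c + d) (a + b)
  have hcd := Nat.add_choose_mul_factorial_mul_factorial d c
  have hab := Nat.add_choose_mul_factorial_mul_factorial b a
  rw [show c + d + (a + b) = a + b + c + d by ring] at hn
  rw [add_comm d c] at hcd
  rw [add_comm b a] at hab
  rw [← hn, ← hcd, ← hab]
  ring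

theorem Nat.choose_mul_choose_mul_choose_comm (a b c d : ℕ) :
    (a + b + c + d).choose (a + b) * (c + d).choose c * (a + b).choose a
      = (a + b + c + d).choose (b + d) * (a + c).choose a * (b + d).choose b := by
  have h := Nat.choose_mul_choose_mul_choose_mul_factorials b d a c
  rw [show b + d + a + c = a + b + c + d by ring,
    ← Nat.choose_mul_choose_mul_choose_mul_factorials a b c d] at h
  refine (Nat.eq_of_mul_eq_mul_right (by positivity) (h.trans ?_)).symm
  ring

noncomputable section

open scoped IsMulCommutative

variable {K : Type*} [CommRing K]

/-- `u ↦ u M` for `M = !![x, y; z, w]`. -/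
def linSubst (x y z w : K) : MvPolynomial (Fin 2) K →ₐ[K] MvPolynomial (Fin 2) K :=
  aeval ![C x * X 0 + C z * X 1, C y * X 0 + C w * X 1]

variable {x y z w : K}

@[simp] theorem linSubst_X_zero : linSubst x y z w (X 0) = C x * X 0 + C z * X 1 := by
  simp [linSubst]

@[simp] theorem linSubst_X_one : linSubst x y z w (X 1) = C y * X 0 + C w * X 1 := by
  simp [linSubst]

@[simp] theorem linSubst_C (a : K) : linSubst x y z w (C a) = C a :=
  (linSubst x y z w).commutes a

theorem pderiv_zero_linSubst (p : MvPolynomial (Fin 2) K) :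
    pderiv 0 (linSubst x y z w p)
      = C x * linSubst x y z w (pderiv 0 p) + C y * linSubst x y z w (pderiv 1 p) := by
  induction p using MvPolynomial.induction_on with
  | C a => simp
  | add p q hp hq => simp only [map_add, hp, hq]; ring
  | mul_X p k hp =>
    fin_cases k <;>
    · simp only [Fin.isValue, Fin.zero_eta, Fin.mk_one, map_mul, linSubst_X_zero, linSubst_X_one,
        pderiv_mul, pderiv_C, map_add, pderiv_X_self, pderiv_X_of_ne zero_ne_one,
        pderiv_X_of_ne one_ne_zero, map_zero, map_one, hp]
      ring

theorem pderiv_one_linSubst (p : MvPolynomial (Fin 2) K) :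
    pderiv 1 (linSubst x y z w p)
      = C z * linSubst x y z w (pderiv 0 p) + C w * linSubst x y z w (pderiv 1 p) := by
  induction p using MvPolynomial.induction_on with
  | C a => simp
  | add p q hp hq => simp only [map_add, hp, hq]; ring
  | mul_X p k hp =>
    fin_cases k <;>
    · simp only [Fin.isValue, Fin.zero_eta, Fin.mk_one, map_mul, linSubst_X_zero, linSubst_X_one,
        pderiv_mul, pderiv_C, map_add, pderiv_X_self, pderiv_X_of_ne zero_ne_one,
        pderiv_X_of_ne one_ne_zero, map_zero, map_one, hp]
      ring

theorem constantCoeff_linSubst (p : MvPolynomial (Fin 2) K) :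
    constantCoeff (linSubst x y z w p) = constantCoeff p := by
  have : constantCoeff.comp (linSubst x y z w).toRingHom = constantCoeff :=
    ringHom_ext (by simp) (by simp [Fin.forall_fin_two])
  exact RingHom.congr_fun this p

-- `∂₀` and `∂₁` commute, so `aeval` may send `X 0, X 1` into the algebra they generate.
variable (K) in
def diffOps : Subalgebra K (Module.End K (MvPolynomial (Fin 2) K)) :=
  Algebra.adjoin K {(pderiv 0).toLinearMap, (pderiv 1).toLinearMap}

instance : IsMulCommutative (diffOps K) :=
  Algebra.isMulCommutative_adjoin K <| by
    have hcomm : Commute (pderiv 0 : Derivation K (MvPolynomial (Fin 2) K) _).toLinearMap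
        (pderiv 1).toLinearMap :=
      LinearMap.ext fun p => pderiv_pderiv_comm 0 1 p
    rintro a (rfl | rfl) b (rfl | rfl)
    exacts [rfl, hcomm, hcomm.symm, rfl]

def symplDiffOp : MvPolynomial (Fin 2) K →ₐ[K] Module.End K (MvPolynomial (Fin 2) K) :=
  (diffOps K).val.comp <| aeval
    ![⟨(pderiv 1).toLinearMap, Algebra.subset_adjoin (by simp)⟩,
      -⟨(pderiv 0).toLinearMap, Algebra.subset_adjoin (by simp)⟩]

@[simp] theorem symplDiffOp_X_zero :
    symplDiffOp (X 0 : MvPolynomial (Fin 2) K) = (pderiv 1).toLinearMap := by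
  simp [symplDiffOp]

@[simp] theorem symplDiffOp_X_one :
    symplDiffOp (X 1 : MvPolynomial (Fin 2) K) = -(pderiv 0).toLinearMap := by
  simp [symplDiffOp]

theorem symplDiffOp_linSubst_X_apply (hdet : x * w - y * z = 1) (k : Fin 2)
    (h : MvPolynomial (Fin 2) K) :
    symplDiffOp (linSubst x y z w (X k)) (linSubst x y z w h)
      = linSubst x y z w (symplDiffOp (X k) h) := by
  have hC : (C x * C w - C y * C z : MvPolynomial (Fin 2) K) = 1 := by
    simp only [← map_mul, ← map_sub, hdet, map_one]
  fin_cases k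
  all_goals
    simp only [Fin.zero_eta, Fin.mk_one, linSubst_X_zero, linSubst_X_one, map_add, map_mul,
      algHom_C, symplDiffOp_X_zero, symplDiffOp_X_one, LinearMap.add_apply, LinearMap.neg_apply,
      Module.End.mul_apply, Module.algebraMap_end_apply, Derivation.coeFn_coe,
      pderiv_zero_linSubst, pderiv_one_linSubst, smul_eq_C_mul, map_neg]
  · linear_combination linSubst x y z w (pderiv 1 h) * hC
  · linear_combination -linSubst x y z w (pderiv 0 h) * hC

theorem symplDiffOp_linSubst_apply (hdet : x * w - y * z = 1) (f h : MvPolynomial (Fin 2) K) :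
    symplDiffOp (linSubst x y z w f) (linSubst x y z w h)
      = linSubst x y z w (symplDiffOp f h) := by
  induction f using MvPolynomial.induction_on generalizing h with
  | C a => simp [Algebra.algebraMap_eq_smul_one]
  | add p q hp hq => simp only [map_add, LinearMap.add_apply, hp, hq]
  | mul_X p k hp =>
    simp only [map_mul, Module.End.mul_apply, symplDiffOp_linSubst_X_apply hdet, hp]

def apolar : LinearMap.BilinForm K (MvPolynomial (Fin 2) K) :=
  symplDiffOp.toLinearMap.compr₂ (lcoeff K 0)

theorem apolar_apply (f h : MvPolynomial (Fin 2) K) :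
    apolar f h = constantCoeff (symplDiffOp f h) :=
  rfl

theorem apolar_linSubst (hdet : x * w - y * z = 1) (f h : MvPolynomial (Fin 2) K) :
    apolar (linSubst x y z w f) (linSubst x y z w h) = apolar f h := by
  rw [apolar_apply, symplDiffOp_linSubst_apply hdet, constantCoeff_linSubst, apolar_apply]

theorem apolar_X_pow_mul_X_pow (c d : ℕ) (h : MvPolynomial (Fin 2) K) :
    apolar (X 0 ^ c * X 1 ^ d) h
      = (-1) ^ d * (c ! * d ! : K) * coeff (Finsupp.single 1 c + Finsupp.single 0 d) h := by
  have hop : symplDiffOp (X 0 ^ c * X 1 ^ d : MvPolynomial (Fin 2) K)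
      = (-1 : K) ^ d • ((pderiv 1).toLinearMap ^ c * (pderiv 0).toLinearMap ^ d) := by
    rw [map_mul, map_pow, map_pow, symplDiffOp_X_zero, symplDiffOp_X_one, ← neg_one_smul K,
      smul_pow, mul_smul_comm]
  rw [apolar_apply, hop, LinearMap.smul_apply, Module.End.mul_apply, constantCoeff_smul,
    constantCoeff_pderiv_pow_pderiv_pow (by decide), smul_eq_mul]
  ring

-- The basis vector `Ω_r`, with `u₁ = X 0` and `u₂ = X 1`.
def mukaiBasis (g r : ℕ) : MvPolynomial (Fin 2) K :=
  C ((-1 : K) ^ r * g.choose r) * (X 0 ^ (g - r) * X 1 ^ r)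

def toBinaryForm (g : ℕ) (v : Fin (g + 1) → K) : MvPolynomial (Fin 2) K :=
  ∑ r, v r • mukaiBasis g r

theorem coeff_single_add_single_X_pow_mul_X_pow (a b c d : ℕ) :
    coeff (Finsupp.single 1 a + Finsupp.single 0 b) (X 0 ^ c * X 1 ^ d : MvPolynomial (Fin 2) K)
      = if b = c ∧ a = d then 1 else 0 := by
  rw [X_pow_eq_monomial, X_pow_eq_monomial, monomial_mul, one_mul, coeff_monomial]
  congr 1
  simp only [Finsupp.ext_iff, Fin.forall_fin_two, Finsupp.add_apply]
  simp [eq_comm, and_comm]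

theorem apolar_mukaiBasis {g r s : ℕ} (hr : r ≤ g) (hs : s ≤ g) :
    apolar (mukaiBasis g r : MvPolynomial (Fin 2) K) (mukaiBasis g s)
      = if r + s = g then (-1 : K) ^ g * g ! * ((-1) ^ r * g.choose r) else 0 := by
  rw [mukaiBasis, mukaiBasis, ← smul_eq_C_mul, ← smul_eq_C_mul, map_smul, map_smul,
    LinearMap.smul_apply, apolar_X_pow_mul_X_pow,
    coeff_single_add_single_X_pow_mul_X_pow]
  by_cases hrs : r + s = g
  · obtain rfl : s = g - r := by omega
    have hfac : (g.choose r * r ! * (g - r)! : K) = g ! := by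
      rw [← Nat.choose_mul_factorial_mul_factorial hr, Nat.cast_mul, Nat.cast_mul]
    have hsign : ((-1) ^ r * (-1) ^ (g - r) : K) = (-1) ^ g := by
      rw [← pow_add, Nat.add_sub_cancel' hr]
    simp only [hrs, and_self, if_true, Nat.sub_sub_self hr, Nat.choose_symm hr]
    simp only [smul_eq_mul]
    linear_combination ((-1) ^ r * (-1) ^ g * g.choose r : K) * hfac
      + ((-1) ^ r * g.choose r ^ 2 * (g - r)! * r ! : K) * hsign
  · rw [if_neg (by omega), if_neg hrs]
    simp

variable (x y z w : K)

def linSubstExpansionTerm (g j p q : ℕ) : MvPolynomial (Fin 2) K :=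
  C ((-1) ^ j * g.choose j * (g - j).choose p * j.choose q
    * (x ^ p * z ^ (g - j - p) * y ^ q * w ^ (j - q))) * (X 0 ^ (p + q) * X 1 ^ (g - p - q))

def aEntTerm (g i j l : ℕ) : K :=
  (-1) ^ (i + j) * if l ≤ j then ((g - i).choose l : K) * (i.choose (j - l) : K) *
    x ^ (g - i - l) * y ^ l * z ^ (i + l - j) * w ^ (j - l) else 0

variable {x y z w}

theorem aEnt_eq_sum_aEntTerm (g i j : ℕ) :
    aEnt K g x y z w i j = ∑ l ∈ range (g + 1), aEntTerm x y z w g i j l :=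
  mul_sum _ _ _

theorem linSubst_mukaiBasis_eq_sum {g j : ℕ} (hj : j ≤ g) :
    linSubst x y z w (mukaiBasis g j)
      = ∑ pq ∈ range (g - j + 1) ×ˢ range (j + 1),
          linSubstExpansionTerm x y z w g j pq.1 pq.2 := by
  simp only [sum_product', mukaiBasis, map_mul, map_pow, linSubst_C, linSubst_X_zero,
    linSubst_X_one]
  rw [add_pow, add_pow, sum_mul_sum]
  simp only [mul_sum]
  refine sum_congr rfl fun p hp => sum_congr rfl fun q hq => ?_
  simp only [mem_range] at hp hq
  simp only [linSubstExpansionTerm, map_mul, map_pow, map_natCast]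
  rw [show g - p - q = (g - j - p) + (j - q) by omega]
  ring

theorem linSubstExpansionTerm_eq {g j p q : ℕ} (hj : j ≤ g) (hp : p ≤ g - j) (hq : q ≤ j) :
    linSubstExpansionTerm x y z w g j p q
      = aEntTerm x y z w g (g - p - q) j q • mukaiBasis g (g - p - q) := by
  have hbin := congrArg (Nat.cast : ℕ → K)
    (Nat.choose_mul_choose_mul_choose_comm q (j - q) p (g - j - p))
  rw [show q + (j - q) = j by omega, show j + p + (g - j - p) = g by omega,
    show p + (g - j - p) = g - j by omega, show j - q + (g - j - p) = g - p - q by omega,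
    add_comm q p] at hbin
  push_cast at hbin
  have hsign : (-1 : K) ^ (g - p - q) * (-1) ^ (g - p - q) = 1 := by
    rw [← mul_pow]
    simp
  simp only [linSubstExpansionTerm, aEntTerm, if_pos hq, mukaiBasis, smul_eq_C_mul,
    ← mul_assoc, ← map_mul, show g - (g - p - q) = p + q by omega, Nat.add_sub_cancel,
    show g - p - q + q - j = g - j - p by omega]
  congr 3
  linear_combination ((-1) ^ j * x ^ p * z ^ (g - j - p) * y ^ q * w ^ (j - q) : K) * hbin
    - ((-1) ^ j * (g.choose (g - p - q) * (p + q).choose q * (g - p - q).choose (j - q))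
      * x ^ p * z ^ (g - j - p) * y ^ q * w ^ (j - q) : K) * hsign

theorem le_of_aEntTerm_ne_zero {g i j l : ℕ} (h : aEntTerm x y z w g i j l ≠ 0) :
    l ≤ j ∧ l ≤ g - i ∧ j - l ≤ i := by
  refine ⟨?_, ?_, ?_⟩ <;> by_contra hlt <;> rw [not_le] at hlt
  · simp [aEntTerm, hlt.not_ge] at h
  · simp [aEntTerm, Nat.choose_eq_zero_of_lt hlt] at h
  · simp [aEntTerm, Nat.choose_eq_zero_of_lt hlt] at h

theorem linSubst_mukaiBasis {g j : ℕ} (hj : j ≤ g) :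
    linSubst x y z w (mukaiBasis g j)
      = ∑ i ∈ range (g + 1), aEnt K g x y z w i j • mukaiBasis g i := by
  simp only [linSubst_mukaiBasis_eq_sum hj, aEnt_eq_sum_aEntTerm, sum_smul, ← sum_product']
  refine sum_bij_ne_zero (fun pq _ _ => (g - pq.1 - pq.2, pq.2)) ?_ ?_ ?_ ?_
  · rintro ⟨p, q⟩ hpq -
    simp only [mem_product, mem_range] at hpq ⊢
    omega
  · rintro ⟨p, q⟩ hpq - ⟨p', q'⟩ hpq' - he
    simp only [mem_product, mem_range, Prod.mk.injEq] at hpq hpq' he ⊢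
    omega
  · rintro ⟨i, l⟩ hil hne
    simp only [mem_product, mem_range] at hil
    obtain ⟨hlj, hli, hjl⟩ := le_of_aEntTerm_ne_zero (left_ne_zero_of_smul hne)
    refine ⟨(g - i - l, l), by simp only [mem_product, mem_range]; omega, ?_,
      Prod.ext (by omega) rfl⟩
    rwa [linSubstExpansionTerm_eq hj (by omega) hlj, show g - (g - i - l) - l = i by omega]
  · rintro ⟨p, q⟩ hpq -
    simp only [mem_product, mem_range] at hpq
    exact linSubstExpansionTerm_eq hj (by omega) (by omega)

theorem apolar_toBinaryForm (g : ℕ) (v w : Fin (g + 1) → ℝ) :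
    apolar (toBinaryForm g v) (toBinaryForm g w) = (-1) ^ g * g ! * mukaiPair g v w := by
  simp only [toBinaryForm, map_sum, map_smul, LinearMap.sum_apply, LinearMap.smul_apply,
    smul_eq_mul, mukaiPair, mul_sum]
  rw [sum_comm]
  refine sum_congr rfl fun r _ => ?_
  rw [sum_eq_single r.rev]
  · rw [apolar_mukaiBasis (by omega) (by omega), if_pos (by rw [Fin.val_rev]; omega)]
    ring
  · intro s _ hs
    rw [apolar_mukaiBasis (by omega) (by omega), if_neg, mul_zero, mul_zero]
    exact fun h => hs (Fin.ext (by rw [Fin.val_rev]; omega))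
  · simp

theorem linSubst_toBinaryForm (g : ℕ) (x y z w : ℝ) (v : Fin (g + 1) → ℝ) :
    linSubst x y z w (toBinaryForm g v) = toBinaryForm g ((Amat g x y z w).mulVec v) := by
  simp only [toBinaryForm, map_sum, map_smul, linSubst_mukaiBasis (Fin.is_le _),
    ← Fin.sum_univ_eq_sum_range (fun i => aEnt ℝ g x y z w i _ • mukaiBasis g i), smul_sum,
    smul_smul, Matrix.mulVec, dotProduct, Amat, Matrix.of_apply, sum_smul]
  rw [sum_comm]
  refine sum_congr rfl fun i _ => sum_congr rfl fun r _ => by rw [mul_comm]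

end

theorem cohomological_FMT_isometry_general (g : ℕ)
    (x y z w : ℝ) (hdet : x * w - y * z = 1) (v w' : Fin (g + 1) → ℝ) :
    mukaiPair g ((Amat g x y z w).mulVec v) ((Amat g x y z w).mulVec w')
      = mukaiPair g v w' := by
  have hscale : ((-1) ^ g * g ! : ℝ) ≠ 0 := by positivity
  apply mul_left_cancel₀ hscale
  rw [← apolar_toBinaryForm, ← apolar_toBinaryForm, ← linSubst_toBinaryForm,
    ← linSubst_toBinaryForm, apolar_linSubst hdet]

/-- For `g ≥ 2` and real `x, y, z, w` with `xw - yz = 1`, the matrix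
`A = (a^{(g)}_{m,n}(x,y,z,w))` is an isometry of the Mukai pairing:
`⟨A v, A w⟩ = ⟨v, w⟩` for all `v, w ∈ ℝ^{g+1}`. -/
theorem cohomological_FMT_isometry (g : ℕ) (hg : 2 ≤ g)
    (x y z w : ℝ) (hdet : x * w - y * z = 1) (v w' : Fin (g + 1) → ℝ) :
    mukaiPair g ((Amat g x y z w).mulVec v) ((Amat g x y z w).mulVec w')
      = mukaiPair g v w' :=
  cohomological_FMT_isometry_general g x y z w hdet v w'
end

section
/- Let g ≥ 2 be an integer, let x, y, z, w be real numbers with xw − yz = 1, and let u ∈ ℂ with Im u ≠ 0 (so that x − yu ≠ 0). For u' ∈ ℂ define Z_{u'} : ℂ^{g+1} → ℂ by Z_{u'}(a) = − Σ_{i=0}^{g} (g choose i) (−u')^{g−i} a_i. Let A be the complexification of the matrix (a^{(g)}_{m,n}(x,y,z,w)); then A is invertible, and for v = (−z + wu)/(x − yu) one has, for every a ∈ ℂ^{g+1}: Z_u(A^{−1} a) = (x − yu)^g · Z_v(a). (This expresses that the Fourier–Mukai transform acts on the central charge Z_{uℓ} by Φ_E · Z_{uℓ} = (x − yu)^g Z_{vℓ}.)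 -/
/-- The complexified `(g+1) × (g+1)` matrix `A(x,y,z,w) = (a^{(g)}_{m,n}(x,y,z,w))`. -/
noncomputable def AmatC (g : ℕ) (x y z w : ℝ) : Matrix (Fin (g + 1)) (Fin (g + 1)) ℂ :=
  Matrix.of fun m n => aEnt ℂ g (x : ℂ) (y : ℂ) (z : ℂ) (w : ℂ) (m : ℕ) (n : ℕ)

/-- The central charge in rank-one coordinates:
`Z_{u'}(a) = - Σ_{i=0}^{g} (g choose i) (-u')^{g-i} a_i`. -/
noncomputable def Zch (g : ℕ) (u : ℂ) (a : Fin (g + 1) → ℂ) : ℂ :=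
  -∑ i : Fin (g + 1), (g.choose (i : ℕ) : ℂ) * (-u) ^ (g - (i : ℕ)) * a i

open Polynomial Finset Matrix

lemma coeff_C_add_C_mul_X_pow {R : Type*} [CommRing R] (a b : R) (k j : ℕ) :
    ((C a + C b * X) ^ k).coeff j = (k.choose j : R) * a ^ (k - j) * b ^ j := by
  rw [add_comm, add_pow, finsetSum_coeff]
  have hterm : ∀ l, ((C b * X) ^ l * C a ^ (k - l) * (k.choose l : R[X])).coeff j
      = if j = l then (k.choose l : R) * a ^ (k - l) * b ^ l else 0 := by
    intro l
    rw [show (C b * X) ^ l * C a ^ (k - l) * (k.choose l : R[X])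
        = C ((k.choose l : R) * a ^ (k - l) * b ^ l) * X ^ l by
      simp only [mul_pow, C_mul, C_pow, C_eq_natCast]; ring, coeff_C_mul_X_pow]
  rw [sum_congr rfl fun l _ => hterm l, sum_ite_eq]
  split_ifs with hj
  · rfl
  · rw [Nat.choose_eq_zero_of_lt (by simpa using hj)]; simp

lemma aEnt_eq_coeff {R : Type*} [CommRing R] (k : ℕ) (x y z w : R) (i j : ℕ) (hj : j ≤ k) :
    aEnt R k x y z w i j = ((C x + C (-y) * X) ^ (k - i) * (C (-z) + C w * X) ^ i).coeff j := by
  rw [coeff_mul, Nat.sum_antidiagonal_eq_sum_range_succ_mk, aEnt, ← sum_filter,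
    show (range (k + 1)).filter (· ≤ j) = range (j + 1) by
      ext; simp only [mem_filter, mem_range]; omega, mul_sum]
  refine sum_congr rfl fun l hl => ?_
  rw [coeff_C_add_C_mul_X_pow, coeff_C_add_C_mul_X_pow]
  rcases le_or_gt (j - l) i with hi | hi
  · have hl : l ≤ j := by simpa [Nat.lt_succ_iff] using hl
    rw [show i + j = (l + (i + l - j)) + 2 * (j - l) by omega,
      show i - (j - l) = i + l - j by omega, pow_add, pow_add, pow_mul, neg_pow y, neg_pow z]
    simp only [neg_one_sq, one_pow]
    ring
  · simp [Nat.choose_eq_zero_of_lt hi]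

def aMat (R : Type*) [CommRing R] (k : ℕ) (x y z w : R) : Matrix (Fin (k + 1)) (Fin (k + 1)) R :=
  Matrix.of fun i j => aEnt R k x y z w i j

def binomVec {R : Type*} [CommRing R] (k : ℕ) (p q : R) : Fin (k + 1) → R :=
  fun i => (k.choose i : R) * p ^ (k - i) * q ^ (i : ℕ)

lemma binomVec_mul_mul {R : Type*} [CommRing R] (k : ℕ) (s p q : R) :
    binomVec k (s * p) (s * q) = s ^ k • binomVec k p q := by
  funext i
  have hi : (i : ℕ) ≤ k := Nat.lt_succ_iff.mp i.isLt
  simp only [binomVec, Pi.smul_apply, smul_eq_mul, mul_pow, ← pow_sub_mul_pow s hi]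
  ring

lemma binomVec_vecMul_aMat {R : Type*} [CommRing R] (k : ℕ) (x y z w p q : R) :
    binomVec k p q ᵥ* aMat R k x y z w = binomVec k (x * p - z * q) (w * q - y * p) := by
  funext j
  have hj : (j : ℕ) ≤ k := Nat.lt_succ_iff.mp j.isLt
  have hlin : C p * (C x + C (-y) * X) + C q * (C (-z) + C w * X)
      = C (x * p - z * q) + C (w * q - y * p) * X := by
    simp only [C_sub, C_mul, C_neg]; ring
  calc (binomVec k p q ᵥ* aMat R k x y z w) j
      = ∑ i ∈ range (k + 1), ((C q * (C (-z) + C w * X)) ^ i *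
          (C p * (C x + C (-y) * X)) ^ (k - i) * (k.choose i : R[X])).coeff j := by
        simp only [vecMul, dotProduct, aMat, of_apply, binomVec, aEnt_eq_coeff _ _ _ _ _ _ _ hj]
        refine (Fin.sum_univ_eq_sum_range (fun i => (k.choose i : R) * p ^ (k - i) * q ^ i *
          ((C x + C (-y) * X) ^ (k - i) * (C (-z) + C w * X) ^ i).coeff j) (k + 1)).trans
          (sum_congr rfl fun i _ => ?_)
        rw [show (C q * (C (-z) + C w * X)) ^ i * (C p * (C x + C (-y) * X)) ^ (k - i) *
            (k.choose i : R[X]) = C ((k.choose i : R) * p ^ (k - i) * q ^ i) *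
              ((C x + C (-y) * X) ^ (k - i) * (C (-z) + C w * X) ^ i) by
          simp only [mul_pow, C_mul, C_pow, C_eq_natCast]; ring, coeff_C_mul]
    _ = ((C (x * p - z * q) + C (w * q - y * p) * X) ^ k).coeff j := by
        rw [← finsetSum_coeff, ← add_pow, add_comm, hlin]
    _ = binomVec k (x * p - z * q) (w * q - y * p) j := coeff_C_add_C_mul_X_pow _ _ _ _

lemma eq_zero_of_forall_binomVec_one_dotProduct_eq_zero {K : Type*} [Field K] [CharZero K] {k : ℕ}
    {b : Fin (k + 1) → K} (h : ∀ t : K, binomVec k 1 t ⬝ᵥ b = 0) : b = 0 := by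
  set P : K[X] := ∑ i : Fin (k + 1), C ((k.choose i : K) * b i) * X ^ (i : ℕ)
  have hP : P = 0 := Polynomial.funext fun t => by
    rw [eval_zero, ← h t]
    simp only [P, eval_finsetSum, eval_mul, eval_C, eval_pow, eval_X, binomVec, dotProduct, one_pow,
      mul_one]
    exact sum_congr rfl fun i _ => by ring
  funext i
  have hcoeff : P.coeff i = (k.choose i : K) * b i := by
    simp only [P, finsetSum_coeff, coeff_C_mul_X_pow, Fin.val_inj, sum_ite_eq, mem_univ, if_true]
  have hchoose : (k.choose i : K) ≠ 0 :=
    Nat.cast_ne_zero.mpr (Nat.choose_pos (Nat.lt_succ_iff.mp i.isLt)).ne'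
  simpa [hP, hchoose] using hcoeff.symm

lemma isUnit_aMat {K : Type*} [Field K] [CharZero K] (k : ℕ) (x y z w : K)
    (hdet : x * w - y * z ≠ 0) : IsUnit (aMat K k x y z w) := by
  rw [isUnit_iff_isUnit_det, isUnit_iff_ne_zero]
  intro h
  obtain ⟨b, hb, hAb⟩ := exists_mulVec_eq_zero_iff.mpr h
  refine hb (eq_zero_of_forall_binomVec_one_dotProduct_eq_zero fun t => ?_)
  -- `(p, q) ↦ (x p - z q, w q - y p)` is invertible, so every `binomVec k 1 t` is hit.
  have hpq : binomVec k 1 t = binomVec k ((w + z * t) / (x * w - y * z))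
      ((y + x * t) / (x * w - y * z)) ᵥ* aMat K k x y z w := by
    rw [binomVec_vecMul_aMat]
    congr 1 <;> rw [mul_div_assoc', mul_div_assoc', div_sub_div_same, eq_div_iff hdet] <;> ring
  rw [hpq, ← dotProduct_mulVec, hAb, dotProduct_zero]

lemma Zch_eq_neg_binomVec_dotProduct (g : ℕ) (u : ℂ) (a : Fin (g + 1) → ℂ) :
    Zch g u a = -(binomVec g (-u) 1 ⬝ᵥ a) := by
  simp [Zch, binomVec, dotProduct]

lemma ofReal_sub_ofReal_mul_ne_zero {x y : ℝ} (hxy : x ≠ 0 ∨ y ≠ 0) {u : ℂ}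
    (hu : u.im ≠ 0) :
    (x : ℂ) - y * u ≠ 0 := by
  intro h
  have hy : y = 0 := by simpa [hu] using congrArg Complex.im h
  have hx : x = 0 := by simpa [hy] using h
  tauto

theorem FMT_action_on_central_charge_general (g : ℕ)
    (x y z w : ℝ) (hdet : x * w - y * z = 1) (u : ℂ) (hu : u.im ≠ 0) :
    IsUnit (AmatC g x y z w) ∧
    ∀ a : Fin (g + 1) → ℂ,
      Zch g u ((AmatC g x y z w)⁻¹.mulVec a)
        = ((x : ℂ) - (y : ℂ) * u) ^ g *
            Zch g ((-(z : ℂ) + (w : ℂ) * u) / ((x : ℂ) - (y : ℂ) * u)) a := by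
  have hdetC : (x : ℂ) * w - y * z = 1 := by exact_mod_cast hdet
  have hA : IsUnit (AmatC g x y z w) := isUnit_aMat g _ _ _ _ (by simp [hdetC])
  refine ⟨hA, fun a => ?_⟩
  have hq : (x : ℂ) - y * u ≠ 0 :=
    ofReal_sub_ofReal_mul_ne_zero (by by_contra! h; simp [h] at hdet) hu
  have hvec : binomVec g (-u) 1 = binomVec g (z - w * u) (x - y * u) ᵥ* AmatC g x y z w := by
    rw [AmatC, ← aMat, binomVec_vecMul_aMat]
    congr 1
    · linear_combination u * hdetC
    · linear_combination -hdetC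
  have hscale : binomVec g ((z : ℂ) - w * u) (x - y * u)
      = ((x : ℂ) - y * u) ^ g • binomVec g (-((-z + w * u) / (x - y * u))) 1 := by
    rw [← binomVec_mul_mul, mul_neg, mul_div_cancel₀ _ hq, mul_one]
    congr 1
    ring
  rw [Zch_eq_neg_binomVec_dotProduct, Zch_eq_neg_binomVec_dotProduct, hvec, ← dotProduct_mulVec,
    mulVec_mulVec, mul_nonsing_inv _ ((isUnit_iff_isUnit_det _).mp hA), one_mulVec, hscale,
    smul_dotProduct, smul_eq_mul, mul_neg]

/-- For `g ≥ 2`, real `x, y, z, w` with `xw - yz = 1` and `u ∈ ℂ` with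
`Im u ≠ 0`, the complexified matrix `A` is invertible and, with
`v = (-z + wu)/(x - yu)`, for every `a ∈ ℂ^{g+1}`:
`Z_u(A⁻¹ a) = (x - yu)^g Z_v(a)`, i.e. `Φ_E · Z_{uℓ} = (x - yu)^g Z_{vℓ}`. -/
theorem FMT_action_on_central_charge (g : ℕ) (hg : 2 ≤ g)
    (x y z w : ℝ) (hdet : x * w - y * z = 1) (u : ℂ) (hu : u.im ≠ 0) :
    IsUnit (AmatC g x y z w) ∧
    ∀ a : Fin (g + 1) → ℂ,
      Zch g u ((AmatC g x y z w)⁻¹.mulVec a)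
        = ((x : ℂ) - (y : ℂ) * u) ^ g *
            Zch g ((-(z : ℂ) + (w : ℂ) * u) / ((x : ℂ) - (y : ℂ) * u)) a :=
  FMT_action_on_central_charge_general g x y z w hdet u hu
end

section
/- Let λ > 0 be rational and let x, y, z, w be integers with xw − yz = 1 and y < 0. Set b = x/y + λ/2, m = (√3 λ)/2, b' = −w/y − 1/(2λy²), m' = √3/(2λy²). For a vector a = (a₀, a₁, a₂, a₃) ∈ ℝ⁴ define the Fourier–Mukai transformed vector F(a) = (−y³ a₃, y a₂, −a₁/y, a₀/y³) (so that ch^{−w/y}(Υ(E)) = F(ch^{x/y}(E)) by Theorem 2.4), and for d = (d₀, d₁, d₂, d₃) ∈ ℝ⁴ define G(d) = (y³ d₃, −y d₂, d₁/y, −d₀/y³) (so that ch^{x/y}(Υ̂[1](E)) = G(ch^{−w/y}(E))). Define I(a) = (3√3 λ/2)(a₂ − λ a₁) (= Im Z_{mℓ, bℓ} in ch^{x/y}-coordinates) and I'(d) = (3√3/(2λy²))(d₂ + d₁/(λ y²)) (= Im Z_{m'ℓ, b'ℓ} in ch^{−w/y}-coordinates). Then for all a, d ∈ ℝ⁴: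 I'(F(a)) = −(1/|λ y|³) · I(a) and I(G(d)) = −|λ y|³ · I'(d). -/
/-- The action of the Fourier-Mukai transform `Υ` on twisted Chern character
coordinates: `ch^{-w/y}(Υ(E)) = F(ch^{x/y}(E))` where
`F(a₀,a₁,a₂,a₃) = (-y³a₃, y a₂, -a₁/y, a₀/y³)`. -/
noncomputable def Fvec (y : ℝ) (a : Fin 4 → ℝ) : Fin 4 → ℝ :=
  ![-y ^ 3 * a 3, y * a 2, -a 1 / y, a 0 / y ^ 3]

/-- The action of the shifted quasi-inverse `Υ̂[1]` on twisted Chern character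
coordinates: `ch^{x/y}(Υ̂[1](E)) = G(ch^{-w/y}(E))` where
`G(d₀,d₁,d₂,d₃) = (y³d₃, -y d₂, d₁/y, -d₀/y³)`. -/
noncomputable def Gvec (y : ℝ) (d : Fin 4 → ℝ) : Fin 4 → ℝ :=
  ![y ^ 3 * d 3, -y * d 2, d 1 / y, -d 0 / y ^ 3]

/-- `Im Z_{mℓ, bℓ}` in `ch^{x/y}`-coordinates, with `b = x/y + λ/2`, `m = √3λ/2`:
`I(a) = (3√3λ/2)(a₂ - λa₁)`. -/
noncomputable def Ifun (lam : ℝ) (a : Fin 4 → ℝ) : ℝ :=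
  (3 * Real.sqrt 3 * lam / 2) * (a 2 - lam * a 1)

/-- `Im Z_{m'ℓ, b'ℓ}` in `ch^{-w/y}`-coordinates, with `b' = -w/y - 1/(2λy²)`,
`m' = √3/(2λy²)`: `I'(d) = (3√3/(2λy²))(d₂ + d₁/(λy²))`. -/
noncomputable def Ifun' (lam y : ℝ) (d : Fin 4 → ℝ) : ℝ :=
  (3 * Real.sqrt 3 / (2 * lam * y ^ 2)) * (d 2 + d 1 / (lam * y ^ 2))

theorem Ifun'_Fvec {lam y : ℝ} (hlam : lam ≠ 0) (hy : y ≠ 0) (a : Fin 4 → ℝ) :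
    Ifun' lam y (Fvec y a) = Ifun lam a / (lam * y) ^ 3 := by
  simp only [Ifun, Ifun', Fvec, Matrix.cons_val]
  field_simp
  ring

theorem Ifun_Gvec {lam y : ℝ} (hlam : lam ≠ 0) (hy : y ≠ 0) (d : Fin 4 → ℝ) :
    Ifun lam (Gvec y d) = (lam * y) ^ 3 * Ifun' lam y d := by
  simp only [Ifun, Ifun', Gvec, Matrix.cons_val]
  field_simp
  ring

theorem FMT_imaginary_part_relation_general (lam : ℚ) (hlam : 0 < lam)
    (y : ℤ) (hy : y < 0) :
    (∀ a : Fin 4 → ℝ,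
      Ifun' (lam : ℝ) (y : ℝ) (Fvec (y : ℝ) a)
        = -(1 / |(lam : ℝ) * (y : ℝ)| ^ 3) * Ifun (lam : ℝ) a) ∧
    (∀ d : Fin 4 → ℝ,
      Ifun (lam : ℝ) (Gvec (y : ℝ) d)
        = -(|(lam : ℝ) * (y : ℝ)| ^ 3) * Ifun' (lam : ℝ) (y : ℝ) d) := by
  have hlamR : (0 : ℝ) < lam := by exact_mod_cast hlam
  have hyR : (y : ℝ) < 0 := by exact_mod_cast hy
  have habs : |(lam : ℝ) * y| ^ 3 = -((lam : ℝ) * y) ^ 3 := by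
    rw [abs_of_neg (mul_neg_of_pos_of_neg hlamR hyR)]
    ring
  refine ⟨fun a => ?_, fun d => ?_⟩
  · rw [Ifun'_Fvec hlamR.ne' hyR.ne, habs]
    ring
  · rw [Ifun_Gvec hlamR.ne' hyR.ne, habs]
    ring

/-- Proposition 4.4: for `λ ∈ ℚ_{>0}` and integers `x, y, z, w` with
`xw - yz = 1` and `y < 0`, for all `a, d ∈ ℝ⁴`:
`Im Z_{m'ℓ, b'ℓ}(Υ(E)) = -(1/|λy|³) Im Z_{mℓ, bℓ}(E)` and
`Im Z_{mℓ, bℓ}(Υ̂[1](E)) = -|λy|³ Im Z_{m'ℓ, b'ℓ}(E)`. -/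
theorem FMT_imaginary_part_relation (lam : ℚ) (hlam : 0 < lam)
    (x y z w : ℤ) (hdet : x * w - y * z = 1) (hy : y < 0) :
    (∀ a : Fin 4 → ℝ,
      Ifun' (lam : ℝ) (y : ℝ) (Fvec (y : ℝ) a)
        = -(1 / |(lam : ℝ) * (y : ℝ)| ^ 3) * Ifun (lam : ℝ) a) ∧
    (∀ d : Fin 4 → ℝ,
      Ifun (lam : ℝ) (Gvec (y : ℝ) d)
        = -(|(lam : ℝ) * (y : ℝ)| ^ 3) * Ifun' (lam : ℝ) (y : ℝ) d) :=
  FMT_imaginary_part_relation_general lam hlam y hy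
end
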